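/- arXiv:2012.15599 — 3 statements merged into one kernel-verified Lean document; each statement's English description precedes it below -/
import Mathlib

section
/- Let a > 2, lₖ = exp(−aᵏ), and sₖ = 1 − 2exp(aᵏ⁻¹ − aᵏ). Then moreover sₖ > 1/3 for all sufficiently large k, and the product ∏ₖ₌₁^∞ (1 − sₖ) converges to 0; in particular the associated generalized Cantor set has Lebesgue measure zero. -/
open Filter

/-!
Since `a > 1`, the gaps `aᵏ - aᵏ⁻¹ = aᵏ⁻¹ (a - 1)` increase with `k`. The gap at `k = 2` already
exceeds `2`, and `e² > 3`, which gives `sₖ > 1/3` from `k = 2` on, and every factor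
`1 - sₖ = 2 exp(aᵏ⁻¹ - aᵏ)` is at most `2 exp(1 - a) < 2 / e < 1`, so the partial products
decay geometrically.
-/

lemma pow_sub_pow_succ_le_of_le {a : ℝ} (ha : 1 ≤ a) {i j : ℕ} (hij : i ≤ j) :
    a ^ j - a ^ (j + 1) ≤ a ^ i - a ^ (i + 1) := by
  have h : ∀ n : ℕ, a ^ n - a ^ (n + 1) = a ^ n * (1 - a) := fun n => by ring
  rw [h, h]
  exact mul_le_mul_of_nonpos_right (pow_le_pow_right₀ ha hij) (by linarith)

lemma pow_pred_sub_pow_le {a : ℝ} (ha : 1 ≤ a) {i k : ℕ} (hik : i + 1 ≤ k) :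
    a ^ (k - 1) - a ^ k ≤ a ^ i - a ^ (i + 1) := by
  obtain ⟨j, rfl⟩ : ∃ j, k = j + 1 := ⟨k - 1, by omega⟩
  simpa using pow_sub_pow_succ_le_of_le ha (by omega : i ≤ j)

lemma tendsto_prod_Icc_of_nonneg_of_le {f : ℕ → ℝ} {q : ℝ} (hq : q < 1)
    (hf₀ : ∀ k, 0 ≤ f k) (hfq : ∀ k, 1 ≤ k → f k ≤ q) :
    Tendsto (fun N => ∏ k ∈ Finset.Icc 1 N, f k) atTop (nhds 0) := by
  have hq₀ : 0 ≤ q := (hf₀ 1).trans (hfq 1 le_rfl)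
  refine squeeze_zero (fun N => Finset.prod_nonneg fun k _ => hf₀ k) (fun N => ?_)
    (tendsto_pow_atTop_nhds_zero_of_lt_one hq₀ hq)
  calc ∏ k ∈ Finset.Icc 1 N, f k ≤ ∏ _k ∈ Finset.Icc 1 N, q :=
        Finset.prod_le_prod (fun k _ => hf₀ k) fun k hk => hfq k (Finset.mem_Icc.1 hk).1
    _ = q ^ N := by simp

/-- With `sₖ = 1 − 2 exp(aᵏ⁻¹ − aᵏ)` and `a > 2`: `sₖ > 1/3` for all sufficiently large
`k`, and the partial products `∏ₖ₌₁ᴺ (1 − sₖ)` tend to `0`; in particular the associated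
generalized Cantor set has Lebesgue measure zero. -/
theorem cantor_proportions_large_and_product_zero (a : ℝ) (ha : 2 < a) :
    (∃ K : ℕ, ∀ k : ℕ, K ≤ k → 1 / 3 < 1 - 2 * Real.exp (a ^ (k - 1) - a ^ k)) ∧
    Tendsto (fun N : ℕ =>
        ∏ k ∈ Finset.Icc 1 N, (1 - (1 - 2 * Real.exp (a ^ (k - 1) - a ^ k))))
      atTop (nhds 0) := by
  have ha₁ : 1 ≤ a := by linarith
  have hexp_two : 3 < Real.exp 2 := by linarith [Real.add_one_lt_exp (by norm_num : (2 : ℝ) ≠ 0)]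
  have hexp_one : 2 < Real.exp 1 := by linarith [Real.add_one_lt_exp one_ne_zero]
  constructor
  · refine ⟨2, fun k hk => ?_⟩
    have hgap : a ^ (k - 1) - a ^ k < -2 :=
      calc a ^ (k - 1) - a ^ k ≤ a ^ 1 - a ^ (1 + 1) := pow_pred_sub_pow_le ha₁ hk
        _ < -2 := by norm_num; nlinarith
    have hexp_gap : Real.exp (a ^ (k - 1) - a ^ k) < 1 / 3 := by
      calc Real.exp (a ^ (k - 1) - a ^ k) < Real.exp (-2) := Real.exp_lt_exp.2 hgap
        _ = (Real.exp 2)⁻¹ := Real.exp_neg 2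
        _ < 1 / 3 := by rw [one_div]; exact inv_strictAnti₀ (by norm_num) hexp_two
    linarith
  · refine tendsto_prod_Icc_of_nonneg_of_le (q := 2 * Real.exp (1 - a)) ?_
      (fun k => by simp only [sub_sub_cancel]; positivity) fun k hk => ?_
    · calc 2 * Real.exp (1 - a) < 2 * Real.exp (-1) := by gcongr; linarith
        _ = 2 * (Real.exp 1)⁻¹ := by rw [Real.exp_neg]
        _ < 1 := by rw [← div_eq_mul_inv, div_lt_one (by positivity)]; exact hexp_one
    · rw [sub_sub_cancel]
      have hgap : a ^ (k - 1) - a ^ k ≤ 1 - a := by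
        simpa using pow_pred_sub_pow_le ha₁ (i := 0) hk
      gcongr
end

section
/- Let μ be the probability measure on the generalized Cantor set 𝒞 = C(s₁,s₂,…) ⊂ [0,1] whose distribution function is the generalized Cantor function, i.e. μ assigns mass 2⁻ᵏ to each of the 2ᵏ stage-k intervals. Assume sₖ > 1/3 for all k. Then for every x ∈ 𝒞 and every k ≥ 1, the mass μ([x − lₖ, x + lₖ]) equals 2⁻ᵏ, where lₖ = ∏ⱼ₌₁ᵏ (1−sⱼ)/2 is the length of each stage-k interval. -/
open Filter

/-- Length `lₖ = ∏ⱼ₌₁ᵏ (1−sⱼ)/2` of the stage-`k` intervals (indices shifted so that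
`s j` is the removal proportion at stage `j+1`). -/
noncomputable def genCantorLen (s : ℕ → ℝ) : ℕ → ℝ
  | 0 => 1
  | k + 1 => genCantorLen s k * (1 - s k) / 2

/-- Left endpoint of the stage-`k` interval indexed by the binary string `b`. -/
noncomputable def genCantorLeft (s : ℕ → ℝ) (b : ℕ → Bool) (k : ℕ) : ℝ :=
  ∑ j ∈ Finset.range k, if b j then (1 + s j) / 2 * genCantorLen s j else 0

/-- Stage `k` of the generalized Cantor construction: `2ᵏ` closed intervals of length `lₖ`. -/
noncomputable def genCantorStage (s : ℕ → ℝ) (k : ℕ) : Set ℝ :=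
  ⋃ b : ℕ → Bool, Set.Icc (genCantorLeft s b k) (genCantorLeft s b k + genCantorLen s k)

/-- The generalized Cantor set `𝒞 = ⋂ₖ C(s₁,…,sₖ)`. -/
noncomputable def genCantorSet (s : ℕ → ℝ) : Set ℝ := ⋂ k, genCantorStage s k

section Aux

variable {s : ℕ → ℝ}

lemma genCantorLen_pos (hs : ∀ k, s k ∈ Set.Ioo (0 : ℝ) 1) : ∀ k, 0 < genCantorLen s k := by
  intro k
  induction k with
  | zero => norm_num [genCantorLen]
  | succ k ih =>
    have h1 : s k < 1 := (hs k).2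
    show 0 < genCantorLen s k * (1 - s k) / 2
    have : 0 < 1 - s k := by linarith
    positivity

lemma genCantorLen_succ_le (hs : ∀ k, s k ∈ Set.Ioo (0 : ℝ) 1) (k : ℕ) :
    genCantorLen s (k + 1) ≤ genCantorLen s k := by
  have h0 : 0 < s k := (hs k).1
  have hl := genCantorLen_pos hs k
  show genCantorLen s k * (1 - s k) / 2 ≤ genCantorLen s k
  nlinarith

lemma genCantorLen_anti (hs : ∀ k, s k ∈ Set.Ioo (0 : ℝ) 1) : Antitone (genCantorLen s) :=
  antitone_nat_of_succ_le (genCantorLen_succ_le hs)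

lemma genCantorLeft_succ (b : ℕ → Bool) (k : ℕ) :
    genCantorLeft s b (k + 1) =
      genCantorLeft s b k + (if b k then (1 + s k) / 2 * genCantorLen s k else 0) := by
  simp [genCantorLeft, Finset.sum_range_succ]

lemma genCantorLeft_congr {b b' : ℕ → Bool} (k : ℕ) (h : ∀ i < k, b i = b' i) :
    genCantorLeft s b k = genCantorLeft s b' k := by
  unfold genCantorLeft
  refine Finset.sum_congr rfl fun j hj => ?_
  rw [h j (Finset.mem_range.mp hj)]

/-- Nesting: `I(b,k) ⊆ I(b,j)` for `j ≤ k`, in the form of endpoint inequalities. -/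
lemma genCantor_nested (hs : ∀ k, s k ∈ Set.Ioo (0 : ℝ) 1) (b : ℕ → Bool) {j k : ℕ}
    (hjk : j ≤ k) :
    genCantorLeft s b j ≤ genCantorLeft s b k ∧
      genCantorLeft s b k + genCantorLen s k ≤ genCantorLeft s b j + genCantorLen s j := by
  induction k with
  | zero => simp_all
  | succ k ih =>
    rcases Nat.lt_or_ge j (k+1) with h | h
    · have hjk' : j ≤ k := Nat.lt_succ_iff.mp h
      obtain ⟨h1, h2⟩ := ih hjk'
      have hstep1 : genCantorLeft s b k ≤ genCantorLeft s b (k+1) := by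
        rw [genCantorLeft_succ]
        have hl := genCantorLen_pos hs k
        have h0 : 0 < s k := (hs k).1
        split <;> nlinarith
      have hstep2 : genCantorLeft s b (k+1) + genCantorLen s (k+1) ≤
          genCantorLeft s b k + genCantorLen s k := by
        rw [genCantorLeft_succ]
        have hl := genCantorLen_pos hs k
        have h0 : 0 < s k := (hs k).1
        show _ + (if b k then _ else _) + genCantorLen s k * (1 - s k) / 2 ≤ _
        split <;> nlinarith
      exact ⟨le_trans h1 hstep1, le_trans hstep2 h2⟩
    · have : j = k + 1 := le_antisymm hjk h
      subst this; exact ⟨le_rfl, le_rfl⟩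

/-- Separation: if `b` and `b'` agree below `j < k`, `b j = false`, `b' j = true`, then the
stage-`k` interval of `b'` lies more than `lₖ` to the right of that of `b`. -/
lemma genCantor_sep (hs : ∀ k, s k ∈ Set.Ioo (0 : ℝ) 1) (hs3 : ∀ k, 1 / 3 < s k)
    {b b' : ℕ → Bool} {j k : ℕ} (hjk : j < k) (hbj : b j = false) (hb'j : b' j = true)
    (hagree : ∀ i < j, b i = b' i) :
    genCantorLeft s b k + genCantorLen s k + genCantorLen s k < genCantorLeft s b' k := by
  have hj1k : j + 1 ≤ k := hjk
  have hLj : genCantorLeft s b j = genCantorLeft s b' j := genCantorLeft_congr j hagree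
  have hb1 : genCantorLeft s b (j+1) = genCantorLeft s b j := by
    rw [genCantorLeft_succ, hbj]; simp
  have hb'1 : genCantorLeft s b' (j+1) =
      genCantorLeft s b j + (1 + s j) / 2 * genCantorLen s j := by
    rw [genCantorLeft_succ, hb'j, hLj]; simp
  have h1 := (genCantor_nested hs b hj1k).2
  have h2 := (genCantor_nested hs b' hj1k).1
  rw [hb1] at h1
  rw [hb'1] at h2
  have hlj := genCantorLen_pos hs j
  have hlk_le : genCantorLen s k ≤ genCantorLen s (j+1) := genCantorLen_anti hs hj1k
  have hlj1 : genCantorLen s (j+1) = genCantorLen s j * (1 - s j) / 2 := rfl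
  have hs3j := hs3 j
  nlinarith

/-- If `b` and `b'` differ at some index below `k` and `x ∈ I(b,k)`, then the ball
`[x−lₖ, x+lₖ]` misses `I(b',k)`. -/
lemma genCantor_ball_disj (hs : ∀ k, s k ∈ Set.Ioo (0 : ℝ) 1) (hs3 : ∀ k, 1 / 3 < s k)
    {b b' : ℕ → Bool} {k : ℕ} (h : ∃ j < k, b j ≠ b' j) {x : ℝ}
    (hx : x ∈ Set.Icc (genCantorLeft s b k) (genCantorLeft s b k + genCantorLen s k)) :
    Set.Icc (x - genCantorLen s k) (x + genCantorLen s k) ∩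
      Set.Icc (genCantorLeft s b' k) (genCantorLeft s b' k + genCantorLen s k) = ∅ := by
  obtain ⟨j0, hj0k, hj0⟩ := h
  have hex : ∃ j, b j ≠ b' j := ⟨j0, hj0⟩
  classical
  set j := Nat.find hex with hjdef
  have hjspec : b j ≠ b' j := Nat.find_spec hex
  have hjmin : ∀ i < j, b i = b' i := fun i hi => by
    by_contra hne; exact absurd (Nat.find_le hne) (Nat.not_le.mpr hi)
  have hjk : j < k := lt_of_le_of_lt (Nat.find_le hj0) hj0k
  obtain ⟨hxl, hxr⟩ := hx
  ext y
  simp only [Set.mem_inter_iff, Set.mem_Icc, Set.mem_empty_iff_false, iff_false, not_and,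
    and_imp]
  intro h1 h2 h3 h4
  cases hb : b j with
  | false =>
    have hb' : b' j = true := by
      cases hb'' : b' j
      · exact absurd (hb.trans hb''.symm) hjspec
      · rfl
    have := genCantor_sep hs hs3 hjk hb hb' hjmin
    linarith
  | true =>
    have hb' : b' j = false := by
      cases hb'' : b' j
      · rfl
      · exact absurd (hb.trans hb''.symm) hjspec
    have := genCantor_sep hs hs3 hjk hb' hb (fun i hi => (hjmin i hi).symm)
    linarith

end Aux

/-- If `μ` is the probability measure giving each of the `2ᵏ` stage-`k` intervals of the
generalized Cantor set mass `2⁻ᵏ` (the measure whose distribution function is the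
generalized Cantor function), and all removal proportions satisfy `sₖ > 1/3`, then for
every `x ∈ 𝒞` and `k ≥ 1` the interval `[x−lₖ, x+lₖ]` has mass exactly `2⁻ᵏ`. -/
theorem cantor_measure_ball_mass (s : ℕ → ℝ) (hs : ∀ k, s k ∈ Set.Ioo (0 : ℝ) 1)
    (hs3 : ∀ k, 1 / 3 < s k) (μ : MeasureTheory.Measure ℝ)
    (hprob : MeasureTheory.IsProbabilityMeasure μ)
    (hμ : ∀ (k : ℕ) (b : ℕ → Bool),
      μ (Set.Icc (genCantorLeft s b k) (genCantorLeft s b k + genCantorLen s k))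
        = (2 : ENNReal)⁻¹ ^ k) :
    ∀ x ∈ genCantorSet s, ∀ k : ℕ, 1 ≤ k →
      μ (Set.Icc (x - genCantorLen s k) (x + genCantorLen s k)) = (2 : ENNReal)⁻¹ ^ k := by
  classical
  intro x hx k _hk
  -- x lies in some stage-k interval
  have hxk : x ∈ genCantorStage s k := Set.mem_iInter.mp hx k
  obtain ⟨_, ⟨b, rfl⟩, hxb⟩ := hxk
  -- notation
  set l := genCantorLen s k with hl
  set I : (ℕ → Bool) → Set ℝ :=
    fun c => Set.Icc (genCantorLeft s c k) (genCantorLeft s c k + l) with hI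
  -- extension of a finite bit string
  set ext : (Fin k → Bool) → (ℕ → Bool) :=
    fun v i => if h : i < k then v ⟨i, h⟩ else false with hext
  -- the stage is the finite union over strings of length k
  have hstage : genCantorStage s k = ⋃ v : Fin k → Bool, I (ext v) := by
    apply Set.Subset.antisymm
    · rintro y ⟨_, ⟨c, rfl⟩, hy⟩
      refine Set.mem_iUnion.mpr ⟨fun i => c i, ?_⟩
      have : genCantorLeft s c k = genCantorLeft s (ext fun i => c i) k := by
        apply genCantorLeft_congr
        intro i hi
        simp [hext, hi]
      simp only [Set.mem_Icc] at hy
      rw [this] at hy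
      exact Set.mem_Icc.mpr hy
    · rintro y hy
      obtain ⟨v, hv⟩ := Set.mem_iUnion.mp hy
      exact Set.mem_iUnion.mpr ⟨ext v, hv⟩
  -- pairwise disjointness
  have hdisj : Pairwise (Function.onFun Disjoint fun v : Fin k → Bool => I (ext v)) := by
    intro v w hvw
    obtain ⟨i, hi⟩ := Function.ne_iff.mp hvw
    have hne : ∃ j < k, ext v j ≠ ext w j := by
      refine ⟨i, i.2, ?_⟩
      simpa [hext, i.2] using hi
    have hxl : genCantorLeft s (ext v) k ∈ I (ext v) := by
      constructor
      · exact le_refl _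
      · have := genCantorLen_pos hs k; linarith
    have hkey := genCantor_ball_disj hs hs3 hne hxl
    rw [Function.onFun, Set.disjoint_iff_inter_eq_empty]
    have hsub : I (ext v) ⊆ Set.Icc (genCantorLeft s (ext v) k - l)
        (genCantorLeft s (ext v) k + l) := by
      intro y hy
      constructor
      · have := genCantorLen_pos hs k; have := hy.1; simp only [hl] at *; linarith
      · exact hy.2
    rw [← Set.subset_empty_iff, ← hkey]
    exact Set.inter_subset_inter_left _ hsub
  -- measure of the stage is 1
  have hmeas : ∀ c : ℕ → Bool, MeasurableSet (I c) := fun c => measurableSet_Icc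
  have hμstage : μ (genCantorStage s k) = 1 := by
    rw [hstage, MeasureTheory.measure_iUnion hdisj fun v => hmeas _]
    have hconst : ∀ v : Fin k → Bool, μ (I (ext v)) = (2 : ENNReal)⁻¹ ^ k :=
      fun v => hμ k (ext v)
    rw [tsum_congr hconst, tsum_fintype, Finset.sum_const]
    have hcard : (Finset.univ : Finset (Fin k → Bool)).card = 2 ^ k := by
      simp [Finset.card_univ]
    rw [hcard, nsmul_eq_mul]
    push_cast
    rw [← mul_pow]
    rw [ENNReal.mul_inv_cancel (by norm_num) (by norm_num)]
    simp
  have hcompl : μ (genCantorStage s k)ᶜ = 0 := by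
    have hms : MeasurableSet (genCantorStage s k) := by
      rw [hstage]; exact MeasurableSet.iUnion fun v => hmeas _
    rw [MeasureTheory.measure_compl hms (by simp [hμstage]), hμstage,
      MeasureTheory.measure_univ, tsub_self]
  -- the ball intersected with the stage is exactly I b
  have hball : Set.Icc (x - l) (x + l) ∩ genCantorStage s k = I b := by
    apply Set.Subset.antisymm
    · rintro y ⟨hy1, hy2⟩
      obtain ⟨_, ⟨c, rfl⟩, hyc⟩ := hy2
      by_cases hbc : ∀ j < k, b j = c j
      · have he : genCantorLeft s b k = genCantorLeft s c k := genCantorLeft_congr k hbc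
        show y ∈ Set.Icc (genCantorLeft s b k) (genCantorLeft s b k + l)
        rw [he]
        exact hyc
      · push_neg at hbc
        have := genCantor_ball_disj hs hs3 hbc hxb
        exfalso
        have : y ∈ (∅ : Set ℝ) := by rw [← this]; exact ⟨hy1, hyc⟩
        exact this
    · intro y hy
      refine ⟨⟨?_, ?_⟩, Set.mem_iUnion.mpr ⟨b, hy⟩⟩
      · have := hy.1; have := hxb.2; linarith
      · have := hy.2; have := hxb.1; linarith
  calc μ (Set.Icc (x - l) (x + l))
      = μ (Set.Icc (x - l) (x + l) ∩ genCantorStage s k) :=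
        (MeasureTheory.measure_inter_conull hcompl).symm
    _ = μ (I b) := by rw [hball]
    _ = (2 : ENNReal)⁻¹ ^ k := hμ k b
end

section
/- Let a > 2 and k ≥ 1. Then 2⁻ᵏ · 2·log(exp(−aᵏ)) = −2·(a/2)ᵏ, and for d ∈ [0, exp(−aᵏ)] there is a constant C independent of k with 2⁻ᵏ·log(d² + exp(−2aᵏ)) + (1 − 2⁻ᵏ)·log(d² + 1) ≤ −2·(a/2)ᵏ + C; moreover −2·(a/2)ᵏ → −∞ as k → ∞. -/
open Filter

/-- Quantitative estimate showing `p_μ = −∞` on the Cantor set: with `lₖ = exp(−aᵏ)`,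
`a > 2`, one has `2⁻ᵏ · 2 log lₖ = −2(a/2)ᵏ`; there is a constant `C` (independent of
`k`) such that for `0 ≤ d ≤ lₖ`,
`2⁻ᵏ log(d² + lₖ²) + (1−2⁻ᵏ) log(d²+1) ≤ −2(a/2)ᵏ + C`; and `−2(a/2)ᵏ → −∞`. -/
theorem cantor_potential_estimate (a : ℝ) (ha : 2 < a) :
    (∀ k : ℕ, 1 ≤ k →
      (2 : ℝ)⁻¹ ^ k * (2 * Real.log (Real.exp (-a ^ k))) = -2 * (a / 2) ^ k) ∧
    (∃ C : ℝ, ∀ k : ℕ, 1 ≤ k → ∀ d : ℝ, d ∈ Set.Icc 0 (Real.exp (-a ^ k)) →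
      (2 : ℝ)⁻¹ ^ k * Real.log (d ^ 2 + Real.exp (-(2 * a ^ k))) +
          (1 - (2 : ℝ)⁻¹ ^ k) * Real.log (d ^ 2 + 1)
        ≤ -2 * (a / 2) ^ k + C) ∧
    Tendsto (fun k : ℕ => -2 * (a / 2) ^ k) atTop atBot := by
  have h2 : (0:ℝ) < 2 := by norm_num
  refine ⟨?_, ⟨2 * Real.log 2, ?_⟩, ?_⟩
  · intro k hk
    rw [Real.log_exp, div_pow, inv_pow]
    field_simp
  · intro k hk d hd
    obtain ⟨hd0, hd1⟩ := hd
    have hl1 : Real.exp (-a ^ k) ≤ 1 := by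
      apply Real.exp_le_one_iff.mpr
      simp only [neg_nonpos]
      positivity
    have hd1' : d ≤ 1 := hd1.trans hl1
    have hdsq : d ^ 2 ≤ Real.exp (-(2 * a ^ k)) := by
      have : d ^ 2 ≤ Real.exp (-a ^ k) ^ 2 := by
        apply pow_le_pow_left₀ hd0 hd1
      calc d ^ 2 ≤ Real.exp (-a ^ k) ^ 2 := this
        _ = Real.exp (-(2 * a ^ k)) := by
          rw [← Real.exp_nat_mul]; ring_nf
    have hinvk : (0:ℝ) < (2:ℝ)⁻¹ ^ k := by positivity
    have hinvk1 : (2:ℝ)⁻¹ ^ k ≤ 1 := by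
      apply pow_le_one₀ <;> norm_num
    have hexp : (0:ℝ) < Real.exp (-(2 * a ^ k)) := Real.exp_pos _
    -- first term
    have h1 : Real.log (d ^ 2 + Real.exp (-(2 * a ^ k))) ≤ Real.log 2 + (-(2 * a ^ k)) := by
      have : d ^ 2 + Real.exp (-(2 * a ^ k)) ≤ 2 * Real.exp (-(2 * a ^ k)) := by
        nlinarith
      calc Real.log (d ^ 2 + Real.exp (-(2 * a ^ k)))
          ≤ Real.log (2 * Real.exp (-(2 * a ^ k))) := by
            apply Real.log_le_log (by positivity) this
        _ = Real.log 2 + (-(2 * a ^ k)) := by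
            rw [Real.log_mul (by norm_num) (ne_of_gt hexp), Real.log_exp]
    have h2' : Real.log (d ^ 2 + 1) ≤ Real.log 2 := by
      apply Real.log_le_log (by positivity)
      nlinarith
    have hkey : (2:ℝ)⁻¹ ^ k * (-(2 * a ^ k)) = -2 * (a / 2) ^ k := by
      rw [div_pow, inv_pow]; field_simp
    have hlog2 : 0 ≤ Real.log 2 := Real.log_nonneg (by norm_num)
    have hterm1 : (2:ℝ)⁻¹ ^ k * Real.log (d ^ 2 + Real.exp (-(2 * a ^ k)))
        ≤ (2:ℝ)⁻¹ ^ k * (Real.log 2 + (-(2 * a ^ k))) :=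
      mul_le_mul_of_nonneg_left h1 hinvk.le
    have hterm2 : (1 - (2:ℝ)⁻¹ ^ k) * Real.log (d ^ 2 + 1)
        ≤ (1 - (2:ℝ)⁻¹ ^ k) * Real.log 2 :=
      mul_le_mul_of_nonneg_left h2' (by linarith)
    have : (2:ℝ)⁻¹ ^ k * (Real.log 2 + (-(2 * a ^ k))) + (1 - (2:ℝ)⁻¹ ^ k) * Real.log 2
        ≤ -2 * (a / 2) ^ k + 2 * Real.log 2 := by
      have := hkey
      nlinarith
    linarith
  · have h1 : Tendsto (fun k : ℕ => (a / 2) ^ k) atTop atTop :=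
      tendsto_pow_atTop_atTop_of_one_lt (by linarith [(one_lt_div h2).mpr ha])
    have h3 : Tendsto (fun k : ℕ => 2 * (a / 2) ^ k) atTop atTop :=
      h1.const_mul_atTop h2
    have h4 : Tendsto (fun k : ℕ => -(2 * (a / 2) ^ k)) atTop atBot :=
      tendsto_neg_atBot_iff.mpr h3
    convert h4 using 2 with k
    ring
end
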